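/- With G(φ, p) as above, every truth assignment F of the variables of φ satisfying m′ clauses yields a vertex cover of G(φ, p) of size (2^k − 1)m − m′ + 2^{k−1}·p·n, consisting of all vertices a_i(s₁,…,s_k) with {s₁,…,s_k} ⊄ F together with all vertices of B(ℓ) for every literal ℓ ∈ F. -/
import Mathlib


open scoped Classical

universe u

/-- A rooted forest on the vertex set of `G` in which every edge of `G` joins two vertices
in ancestor--descendant relationship, presented via its ancestor relation `anc`:
`anc u v` means that `u` is an ancestor of `v` (every vertex is its own ancestor).
The ancestors of each vertex form a chain, which makes the order a forest order. -/
structure ElimForest {V : Type u} (G : SimpleGraph V) where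
  anc : V → V → Prop
  refl : ∀ v, anc v v
  antisymm : ∀ u v, anc u v → anc v u → u = v
  trans : ∀ u v w, anc u v → anc v w → anc u w
  ancTotal : ∀ u v w, anc u w → anc v w → anc u v ∨ anc v u
  adjComparable : ∀ u v, G.Adj u v → anc u v ∨ anc v u

/-- `S` is a vertex cover of `G`: every edge of `G` has an endpoint in `S`. -/
def IsVertexCover {V : Type u} (G : SimpleGraph V) (S : Set V) : Prop :=
  ∀ ⦃u v : V⦄, G.Adj u v → u ∈ S ∨ v ∈ S

/-- The vertex cover number of `G`. -/
noncomputable def vcNum (V : Type u) [Fintype V] (G : SimpleGraph V) : ℕ :=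
  sInf {n | ∃ S : Finset V, IsVertexCover G ↑S ∧ S.card = n}

/-- The `A`-side vertices of `G(φ, p)`: a vertex `a_i(s₁, …, s_k)` for each clause index
`i` and each choice of polarities `s : Fin k → Bool` (`s j = true` meaning the literal
`ℓ_j` itself is chosen, `s j = false` meaning its negation) that is not all-negated. -/
abbrev CnfAVtx (m k : ℕ) : Type := Fin m × {s : Fin k → Bool // s ≠ fun _ => false}

/-- The vertices of `G(φ, p)` (with `γ = 2^(k-1) * p`): the `A`-side vertices, together
with the `B`-side vertices `(x, t, b)` for each variable `x`, index `t ∈ [γ]` and polarity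
`b` (`b = true` for `B₊`, i.e. `B(x)`, and `b = false` for `B₋`, i.e. `B(¬x)`). -/
abbrev CnfVtx (n m k γ : ℕ) : Type := CnfAVtx m k ⊕ (Fin n × Fin γ × Bool)

/-- A `k`-CNF formula `φ` on `n` variables with `m` clauses is a map sending each clause
index `i` and position `j` to the literal `(x, b)`: variable `x` with polarity `b`.
`elit φ i s j` is the literal `s_j ∈ {ℓ_j, ¬ℓ_j}` selected by the polarity choice `s`. -/
def elit {n m k : ℕ} (φ : Fin m → Fin k → Fin n × Bool) (i : Fin m) (s : Fin k → Bool)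
    (j : Fin k) : Fin n × Bool :=
  ((φ i j).1, if s j then (φ i j).2 else !(φ i j).2)

/-- Underlying relation of `G(φ, p)`: `a_i(s₁, …, s_k)` is joined to every vertex of
`B(s₁) ∪ … ∪ B(s_k)`, and `B(x)` is joined completely to `B(¬x)` for every variable. -/
def cnfRel {n m k γ : ℕ} (φ : Fin m → Fin k → Fin n × Bool) :
    CnfVtx n m k γ → CnfVtx n m k γ → Prop
  | Sum.inl (i, s), Sum.inr (x, _, b) => ∃ j : Fin k, elit φ i s.1 j = (x, b)
  | Sum.inr (x, _, b), Sum.inr (x', _, b') => x = x' ∧ b ≠ b'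
  | _, _ => False

/-- The tripartite graph `G(φ, p)`. -/
def cnfGraph {n m k : ℕ} (φ : Fin m → Fin k → Fin n × Bool) (p : ℕ) :
    SimpleGraph (CnfVtx n m k (2 ^ (k - 1) * p)) :=
  SimpleGraph.fromRel (cnfRel φ)

/-- Number of clauses of `φ` satisfied by the truth assignment `f`. -/
noncomputable def satCount {n m k : ℕ} (φ : Fin m → Fin k → Fin n × Bool)
    (f : Fin n → Bool) : ℕ :=
  (Finset.univ.filter fun i : Fin m => ∃ j : Fin k, f (φ i j).1 = (φ i j).2).card

/-- Number of occurrences of the variable `x` in `φ`. -/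
noncomputable def occCount {n m k : ℕ} (φ : Fin m → Fin k → Fin n × Bool) (x : Fin n) : ℕ :=
  (Finset.univ.filter fun ij : Fin m × Fin k => (φ ij.1 ij.2).1 = x).card

/-- The set `B(ℓ)` of `B`-side vertices for the literal `ℓ = (x, b)`. -/
def Bset {n m k γ : ℕ} (x : Fin n) (b : Bool) : Finset (CnfVtx n m k γ) :=
  Finset.univ.image fun t : Fin γ => Sum.inr (x, t, b)

/-- The set `A(C_i)` of `A`-side vertices for the clause `C_i`. -/
noncomputable def Aset {n m k γ : ℕ} (i : Fin m) : Finset (CnfVtx n m k γ) :=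
  Finset.univ.filter fun v : CnfVtx n m k γ =>
    ∃ s : {s : Fin k → Bool // s ≠ fun _ => false}, v = Sum.inl (i, s)


section Aux

open Finset

lemma myCardFilterSum {α β : Type*} [Fintype α] [Fintype β] (p : α ⊕ β → Prop) :
    (Finset.univ.filter p).card =
      (Finset.univ.filter fun a => p (Sum.inl a)).card +
        (Finset.univ.filter fun b => p (Sum.inr b)).card := by
  classical
  simp only [Finset.card_filter]
  rw [Fintype.sum_sum_type]

lemma myCardFilterProd {α β : Type*} [Fintype α] [Fintype β] (p : α × β → Prop) :
    (Finset.univ.filter p).card =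
      ∑ a : α, (Finset.univ.filter fun b => p (a, b)).card := by
  classical
  simp only [Finset.card_filter]
  rw [Fintype.sum_prod_type]

lemma mySubtypeCard (k : ℕ) :
    Fintype.card {s : Fin k → Bool // s ≠ fun _ => false} = 2 ^ k - 1 := by
  classical
  have : Fintype.card {s : Fin k → Bool // ¬ s = fun _ => false} =
      Fintype.card (Fin k → Bool) - Fintype.card {s : Fin k → Bool // s = fun _ => false} :=
    Fintype.card_subtype_compl _
  simp only [Fintype.card_subtype_eq, Fintype.card_fun, Fintype.card_fin, Fintype.card_bool] at this
  exact this

lemma myNatCardSigma {ι : Type*} [Fintype ι] (g : ι → Type*) [∀ i, Fintype (g i)] :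
    Nat.card (Σ i, g i) = ∑ i, Nat.card (g i) := by
  simp [Nat.card_eq_fintype_card]

end Aux

/-- A truth assignment `f` satisfying `m'` clauses of `φ` yields a vertex cover of
`G(φ, p)` of size `(2^k - 1) m - m' + 2^(k-1) p n`, consisting of the vertices
`a_i(s₁, …, s_k)` whose selected literals are not all true under `f`, together with all
vertices of `B(ℓ)` for every literal `ℓ` true under `f`. -/

theorem assignment_gives_cover (n m k p : ℕ) (hk : 1 ≤ k)
    (φ : Fin m → Fin k → Fin n × Bool)
    (hinj : ∀ i : Fin m, Function.Injective fun j => (φ i j).1)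
    (m' : ℕ) (hm' : m' = Finset.univ.sup fun g : Fin n → Bool => satCount φ g)
    (f : Fin n → Bool) (hf : satCount φ f = m') :
    IsVertexCover (cnfGraph φ p)
        ↑(Finset.univ.filter fun v : CnfVtx n m k (2 ^ (k - 1) * p) =>
          match v with
          | Sum.inl (i, s) => ¬ ∀ j : Fin k, f (elit φ i s.1 j).1 = (elit φ i s.1 j).2
          | Sum.inr (x, _, b) => f x = b) ∧
      (Finset.univ.filter fun v : CnfVtx n m k (2 ^ (k - 1) * p) =>
          match v with
          | Sum.inl (i, s) => ¬ ∀ j : Fin k, f (elit φ i s.1 j).1 = (elit φ i s.1 j).2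
          | Sum.inr (x, _, b) => f x = b).card =
        (2 ^ k - 1) * m - m' + 2 ^ (k - 1) * p * n := by
  classical
  constructor
  · intro u v huv
    rw [cnfGraph, SimpleGraph.fromRel_adj] at huv
    obtain ⟨hne, hrel⟩ := huv
    match u, v with
    | Sum.inl (i, s), Sum.inl (i', s') => exact absurd hrel (by simp [cnfRel])
    | Sum.inl (i, s), Sum.inr (x, t, b) =>
      have hrel' : ∃ j : Fin k, elit φ i s.1 j = (x, b) := by
        rcases hrel with h | h
        · exact h
        · exact h.elim
      by_cases h : ∀ j : Fin k, f (elit φ i s.1 j).1 = (elit φ i s.1 j).2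
      · right
        obtain ⟨j, hj⟩ := hrel'
        have hx := h j
        rw [hj] at hx
        simp only [Finset.coe_filter, Set.mem_setOf_eq, Finset.mem_univ, true_and]
        exact hx
      · left
        simp only [Finset.coe_filter, Set.mem_setOf_eq, Finset.mem_univ, true_and]
        exact h
    | Sum.inr (x, t, b), Sum.inl (i, s) =>
      have hrel' : ∃ j : Fin k, elit φ i s.1 j = (x, b) := by
        rcases hrel with h | h
        · exact h.elim
        · exact h
      by_cases h : ∀ j : Fin k, f (elit φ i s.1 j).1 = (elit φ i s.1 j).2
      · left
        obtain ⟨j, hj⟩ := hrel'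
        have hx := h j
        rw [hj] at hx
        simp only [Finset.coe_filter, Set.mem_setOf_eq, Finset.mem_univ, true_and]
        exact hx
      · right
        simp only [Finset.coe_filter, Set.mem_setOf_eq, Finset.mem_univ, true_and]
        exact h
    | Sum.inr (x, t, b), Sum.inr (x', t', b') =>
      have hxb : x = x' ∧ b ≠ b' := by
        rcases hrel with h | h
        · exact h
        · exact ⟨h.1.symm, fun hb => h.2 hb.symm⟩
      obtain ⟨rfl, hbb⟩ := hxb
      simp only [Finset.coe_filter, Set.mem_setOf_eq, Finset.mem_univ, true_and]
      by_cases hfx : f x = b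
      · exact Or.inl hfx
      · right
        cases b <;> cases b' <;> simp_all
  · have h2k : 2 ≤ 2 ^ k := by
      calc 2 = 2 ^ 1 := rfl
      _ ≤ 2 ^ k := Nat.pow_le_pow_right (by norm_num) hk
    have key : ∀ i : Fin m,
        Nat.card {s : {s : Fin k → Bool // s ≠ fun _ => false} //
          ¬ ∀ j : Fin k, f (elit φ i s.1 j).1 = (elit φ i s.1 j).2} =
        (2 ^ k - 1) - (if ∃ j : Fin k, f (φ i j).1 = (φ i j).2 then 1 else 0) := by
      intro i
      set s₀ : Fin k → Bool := fun j => decide (f (φ i j).1 = (φ i j).2) with hs₀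
      have hiff : ∀ s : Fin k → Bool,
          (∀ j : Fin k, f (elit φ i s j).1 = (elit φ i s j).2) ↔ s = s₀ := by
        intro s
        rw [funext_iff]
        apply forall_congr'
        intro j
        simp only [elit, hs₀]
        cases hsj : s j <;> cases hb : (φ i j).2 <;> cases hfx : f (φ i j).1 <;> simp
      have hsat : (∃ j : Fin k, f (φ i j).1 = (φ i j).2) ↔ s₀ ≠ (fun _ => false) := by
        simp [hs₀, funext_iff]
      have h1 : Nat.card {s : {s : Fin k → Bool // s ≠ fun _ => false} //
            ¬ ∀ j : Fin k, f (elit φ i s.1 j).1 = (elit φ i s.1 j).2} =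
          Nat.card {s : {s : Fin k → Bool // s ≠ fun _ => false} // ¬ s.1 = s₀} :=
        Nat.card_congr (Equiv.subtypeEquivRight fun s => not_congr (hiff s.1))
      have h2 : Nat.card {s : {s : Fin k → Bool // s ≠ fun _ => false} // s.1 = s₀} +
          Nat.card {s : {s : Fin k → Bool // s ≠ fun _ => false} // ¬ s.1 = s₀} =
          2 ^ k - 1 := by
        have hcompl := Nat.card_congr
          (Equiv.sumCompl (fun s : {s : Fin k → Bool // s ≠ fun _ => false} => s.1 = s₀))
        rw [Nat.card_sum] at hcompl
        rw [hcompl, Nat.card_eq_fintype_card, mySubtypeCard]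
      have h3 : Nat.card {s : {s : Fin k → Bool // s ≠ fun _ => false} // s.1 = s₀} =
          if ∃ j : Fin k, f (φ i j).1 = (φ i j).2 then 1 else 0 := by
        split_ifs with hc
        · have hmem : s₀ ≠ fun _ => false := hsat.mp hc
          have he : Nat.card {s : {s : Fin k → Bool // s ≠ fun _ => false} // s.1 = s₀} =
              Nat.card {s : {s : Fin k → Bool // s ≠ fun _ => false} //
                s = (⟨s₀, hmem⟩ : {s : Fin k → Bool // s ≠ fun _ => false})} :=
            Nat.card_congr (Equiv.subtypeEquivRight fun s =>
              ⟨fun h => Subtype.ext h, fun h => by rw [h]⟩)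
          rw [he, Nat.card_eq_fintype_card, Fintype.card_subtype_eq]
        · have hs0 : s₀ = fun _ => false := by
            by_contra h
            exact hc (hsat.mpr h)
          have : IsEmpty {s : {s : Fin k → Bool // s ≠ fun _ => false} // s.1 = s₀} :=
            ⟨fun s => s.1.2 (s.2.trans hs0)⟩
          exact Nat.card_of_isEmpty
      rw [h1]
      omega
    have hA : Nat.card {a : CnfAVtx m k //
        ¬ ∀ j : Fin k, f (elit φ a.1 a.2.1 j).1 = (elit φ a.1 a.2.1 j).2} =
        (2 ^ k - 1) * m - m' := by
      rw [Nat.card_congr (Equiv.subtypeProdEquivSigmaSubtype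
        (fun (i : Fin m) (s : {s : Fin k → Bool // s ≠ fun _ => false}) =>
          ¬ ∀ j : Fin k, f (elit φ i s.1 j).1 = (elit φ i s.1 j).2))]
      rw [myNatCardSigma]
      rw [Finset.sum_congr rfl fun i _ => key i]
      have hle : ∀ i : Fin m,
          (if ∃ j : Fin k, f (φ i j).1 = (φ i j).2 then 1 else 0) ≤ 2 ^ k - 1 := by
        intro i
        split_ifs <;> omega
      have hsum : (∑ i : Fin m, ((2 ^ k - 1) -
            (if ∃ j : Fin k, f (φ i j).1 = (φ i j).2 then 1 else 0))) +
          (∑ i : Fin m, (if ∃ j : Fin k, f (φ i j).1 = (φ i j).2 then 1 else 0)) =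
          (2 ^ k - 1) * m := by
        rw [← Finset.sum_add_distrib,
          Finset.sum_congr rfl fun i _ => Nat.sub_add_cancel (hle i)]
        simp [mul_comm]
      have hsatsum : (∑ i : Fin m,
          (if ∃ j : Fin k, f (φ i j).1 = (φ i j).2 then 1 else 0)) = m' := by
        rw [← hf, satCount, Finset.card_filter]
      generalize hT : (2 ^ k - 1) * m = T at hsum ⊢
      omega
    have hB : Nat.card {b : Fin n × Fin (2 ^ (k - 1) * p) × Bool // f b.1 = b.2.2} =
        2 ^ (k - 1) * p * n := by
      rw [Nat.card_congr (Equiv.subtypeProdEquivSigmaSubtype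
        (fun (x : Fin n) (tb : Fin (2 ^ (k - 1) * p) × Bool) => f x = tb.2))]
      rw [myNatCardSigma]
      have hx : ∀ x : Fin n,
          Nat.card {tb : Fin (2 ^ (k - 1) * p) × Bool // f x = tb.2} =
          2 ^ (k - 1) * p := by
        intro x
        rw [Nat.card_congr (Equiv.subtypeProdEquivSigmaSubtype
          (fun (t : Fin (2 ^ (k - 1) * p)) (b : Bool) => f x = b))]
        rw [myNatCardSigma]
        have hb : Nat.card {b : Bool // f x = b} = 1 := by
          rw [Nat.card_congr (Equiv.subtypeEquivRight fun b => eq_comm),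
            Nat.card_eq_fintype_card, Fintype.card_subtype_eq]
        simp [hb]
      rw [Finset.sum_congr rfl fun x _ => hx x]
      simp [mul_comm]
    rw [← Fintype.card_subtype, ← Nat.card_eq_fintype_card,
      Nat.card_congr (Equiv.subtypeSum), Nat.card_sum]
    show Nat.card {a : CnfAVtx m k //
        ¬ ∀ j : Fin k, f (elit φ a.1 a.2.1 j).1 = (elit φ a.1 a.2.1 j).2} +
      Nat.card {b : Fin n × Fin (2 ^ (k - 1) * p) × Bool // f b.1 = b.2.2} = _
    rw [hA, hB]
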